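/- For all d, k ≥ 0 and all n, the maximum number ℓ_d^k(n) of leaves of a rooted tree of out-degree at most d and depth at most n not containing the full binary tree of depth k+1 as a minor equals the sum over i = 0,…,k of (d−1)^i · binomial(n, i). -/
import Mathlib


/-- A rooted tree, encoded as a finite prefix-closed set of finite sequences of
natural numbers containing the root `[]`; `v ++ [i]` is a child of `v`. -/
def IsTreeSet (T : Finset (List ℕ)) : Prop :=
  [] ∈ T ∧ ∀ (v : List ℕ) (i : ℕ), v ++ [i] ∈ T → v ∈ T

/-- Every node of `T` has at most `d` children (out-degree at most `d`). -/
def DegLE (T : Finset (List ℕ)) (d : ℕ) : Prop :=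
  ∀ v ∈ T, { i : ℕ | v ++ [i] ∈ T }.ncard ≤ d

/-- Every node of `T` has depth at most `n`. -/
def DepthLE (T : Finset (List ℕ)) (n : ℕ) : Prop :=
  ∀ v ∈ T, v.length ≤ n

/-- `v` is a leaf of `T`. -/
def IsLeaf (T : Finset (List ℕ)) (v : List ℕ) : Prop :=
  v ∈ T ∧ ∀ i : ℕ, v ++ [i] ∉ T

/-- The number of leaves of `T`. -/
noncomputable def leafCount (T : Finset (List ℕ)) : ℕ :=
  { v : List ℕ | IsLeaf T v }.ncard

/-- `T` contains the full binary tree of depth `m` as a minor: there is a map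
`f` from binary strings of length at most `m` into `T` sending children to
proper descendants, such that the images of the two children of a node are
incomparable. -/
def HasFBTMinor (T : Finset (List ℕ)) (m : ℕ) : Prop :=
  ∃ f : List (Fin 2) → List ℕ,
    (∀ v : List (Fin 2), v.length ≤ m → f v ∈ T) ∧
    (∀ (v : List (Fin 2)) (j : Fin 2), v.length < m →
        f v <+: f (v ++ [j]) ∧ f v ≠ f (v ++ [j])) ∧
    (∀ v : List (Fin 2), v.length < m →
        ¬ f (v ++ [0]) <+: f (v ++ [1]) ∧ ¬ f (v ++ [1]) <+: f (v ++ [0]))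

/-- `ell d k n`: the maximum number of leaves of a rooted tree with out-degree
at most `d` and depth at most `n` that does not contain the full binary tree of
depth `k+1` as a minor. -/
noncomputable def ell (d k n : ℕ) : ℕ :=
  sSup { L : ℕ | ∃ T : Finset (List ℕ),
    IsTreeSet T ∧ DegLE T d ∧ DepthLE T n ∧ ¬ HasFBTMinor T (k + 1) ∧
    leafCount T = L }


open List Finset

section Basics

/-- The subtree of `T` rooted at the child `i` of the root. -/
def subAt (i : ℕ) (T : Finset (List ℕ)) : Finset (List ℕ) :=
  (T.filter (fun v => v.headI = i ∧ v ≠ [])).image List.tail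

lemma mem_subAt {i : ℕ} {T : Finset (List ℕ)} {w : List ℕ} :
    w ∈ subAt i T ↔ i :: w ∈ T := by
  simp only [subAt, Finset.mem_image, Finset.mem_filter]
  constructor
  · rintro ⟨v, ⟨hv, h1, h2⟩, rfl⟩
    obtain ⟨a, t, rfl⟩ := List.exists_cons_of_ne_nil h2
    simp only [List.headI_cons] at h1
    subst h1; simpa using hv
  · intro h; exact ⟨i :: w, ⟨h, rfl, by simp⟩, rfl⟩

lemma tree_prefix_mem {T : Finset (List ℕ)} (hT : IsTreeSet T) (w : List ℕ) :
    ∀ v, v ++ w ∈ T → v ∈ T := by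
  induction w using List.reverseRecOn with
  | nil => intro v h; simpa using h
  | append_singleton w a ih =>
    intro v h
    rw [← List.append_assoc] at h
    exact ih v (hT.2 (v ++ w) a h)

/-- `kids T` : the set of children indices of the root. -/
def kids (T : Finset (List ℕ)) : Finset ℕ :=
  (T.filter (fun v => v.length = 1)).image List.headI

lemma mem_kids {T : Finset (List ℕ)} {i : ℕ} : i ∈ kids T ↔ [i] ∈ T := by
  simp only [kids, Finset.mem_image, Finset.mem_filter]
  constructor
  · rintro ⟨v, ⟨hv, hl⟩, rfl⟩
    obtain ⟨a, rfl⟩ := List.length_eq_one_iff.1 hl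
    simpa using hv
  · intro h; exact ⟨[i], ⟨h, rfl⟩, rfl⟩

open Classical in
/-- The set of leaves of `T`, as a Finset. -/
noncomputable def leafF (T : Finset (List ℕ)) : Finset (List ℕ) :=
  T.filter (fun v => ∀ i, v ++ [i] ∉ T)

lemma mem_leafF {T : Finset (List ℕ)} {v : List ℕ} : v ∈ leafF T ↔ IsLeaf T v := by
  simp [leafF, IsLeaf]

lemma leafCount_eq (T : Finset (List ℕ)) : leafCount T = (leafF T).card := by
  have h : { v : List ℕ | IsLeaf T v } = ↑(leafF T) := by
    ext v; simp [mem_leafF]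
  rw [leafCount, h, Set.ncard_coe_finset]

end Basics
section Minor

lemma fbt_mono {T : Finset (List ℕ)} {m : ℕ} (h : HasFBTMinor T (m + 1)) :
    HasFBTMinor T m := by
  obtain ⟨f, h1, h2, h3⟩ := h
  exact ⟨f, fun v hv => h1 v (hv.trans (Nat.le_succ _)),
    fun v j hv => h2 v j (hv.trans (Nat.lt_succ_self _)),
    fun v hv => h3 v (hv.trans (Nat.lt_succ_self _))⟩

lemma fbt_not_empty {m : ℕ} : ¬ HasFBTMinor (∅ : Finset (List ℕ)) m := by
  rintro ⟨f, h1, -, -⟩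
  simpa using h1 [] (by simp)

lemma fbt_chain {m : ℕ} {f : List (Fin 2) → List ℕ}
    (h2 : ∀ (v : List (Fin 2)) (j : Fin 2), v.length < m →
        f v <+: f (v ++ [j]) ∧ f v ≠ f (v ++ [j])) :
    ∀ (w v : List (Fin 2)), v.length + w.length ≤ m → f v <+: f (v ++ w) := by
  intro w
  induction w with
  | nil => intro v _; simp
  | cons a w ih =>
    intro v hv
    have h1 : v.length < m := by simp at hv; omega
    have ha := (h2 v a h1).1
    have hb := ih (v ++ [a]) (by simp at hv ⊢; omega)
    have he : (v ++ [a]) ++ w = v ++ a :: w := by simp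
    rw [he] at hb
    exact ha.trans hb

/-- Lift a minor of a subtree to a minor of the tree. -/
lemma fbt_lift {T : Finset (List ℕ)} {i m : ℕ}
    (h : HasFBTMinor (subAt i T) m) : HasFBTMinor T m := by
  obtain ⟨f, h1, h2, h3⟩ := h
  refine ⟨fun v => i :: f v, fun v hv => mem_subAt.1 (h1 v hv), fun v j hv => ?_, fun v hv => ?_⟩
  · obtain ⟨ha, hb⟩ := h2 v j hv
    exact ⟨List.cons_prefix_cons.2 ⟨rfl, ha⟩, by simpa using hb⟩
  · obtain ⟨ha, hb⟩ := h3 v hv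
    constructor
    · intro hc; exact ha (List.cons_prefix_cons.1 hc).2
    · intro hc; exact hb (List.cons_prefix_cons.1 hc).2

/-- Combining FBT minors of depth `m` in two distinct subtrees gives depth `m+1`. -/
lemma fbt_combine {T : Finset (List ℕ)} {m i j : ℕ} (hij : i ≠ j)
    (hroot : [] ∈ T)
    (hi : HasFBTMinor (subAt i T) m) (hj : HasFBTMinor (subAt j T) m) :
    HasFBTMinor T (m + 1) := by
  obtain ⟨fi, hi1, hi2, hi3⟩ := hi
  obtain ⟨fj, hj1, hj2, hj3⟩ := hj
  refine ⟨fun v => match v with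
    | [] => []
    | b :: v' => if b = 0 then i :: fi v' else j :: fj v', ?_, ?_, ?_⟩
  · rintro (_ | ⟨b, v'⟩) hv
    · exact hroot
    · simp only [List.length_cons] at hv
      by_cases hb : b = 0 <;> simp only [hb, if_true, if_false, reduceIte]
      · exact mem_subAt.1 (hi1 v' (by omega))
      · exact mem_subAt.1 (hj1 v' (by omega))
  · rintro (_ | ⟨b, v'⟩) jj hv
    · constructor
      · simp
      · by_cases hb : jj = 0 <;> simp [hb]
    · simp only [List.length_cons] at hv
      have hlt : v'.length < m := by omega
      by_cases hb : b = 0 <;> simp only [hb, List.cons_append, if_true, if_false, reduceIte]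
      · obtain ⟨ha, hne⟩ := hi2 v' jj hlt
        exact ⟨List.cons_prefix_cons.2 ⟨rfl, ha⟩, by simpa using hne⟩
      · obtain ⟨ha, hne⟩ := hj2 v' jj hlt
        exact ⟨List.cons_prefix_cons.2 ⟨rfl, ha⟩, by simpa using hne⟩
  · rintro (_ | ⟨b, v'⟩) hv
    · constructor
      · simp only [List.nil_append]
        show ¬ (i :: fi [] <+: j :: fj [])
        intro hc; exact hij (List.cons_prefix_cons.1 hc).1
      · simp only [List.nil_append]
        show ¬ (j :: fj [] <+: i :: fi [])
        intro hc; exact hij ((List.cons_prefix_cons.1 hc).1).symm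
    · simp only [List.length_cons] at hv
      have hlt : v'.length < m := by omega
      by_cases hb : b = 0 <;> simp only [hb, List.cons_append, if_true, if_false, reduceIte]
      · obtain ⟨ha, hc⟩ := hi3 v' hlt
        constructor
        · intro hp; exact ha (List.cons_prefix_cons.1 hp).2
        · intro hp; exact hc (List.cons_prefix_cons.1 hp).2
      · obtain ⟨ha, hc⟩ := hj3 v' hlt
        constructor
        · intro hp; exact ha (List.cons_prefix_cons.1 hp).2
        · intro hp; exact hc (List.cons_prefix_cons.1 hp).2

end Minor
section Decomp

lemma fin2_cases (b : Fin 2) : b = 0 ∨ b = 1 := by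
  fin_cases b
  · left; rfl
  · right; rfl

/-- Helper: if all images of strings starting with `b` live in subtree `c`,
the branch below `b` gives an FBT minor of depth `m` of that subtree. -/
lemma fbt_branch {T : Finset (List ℕ)} {m : ℕ} {f : List (Fin 2) → List ℕ}
    (h1 : ∀ v : List (Fin 2), v.length ≤ m + 1 → f v ∈ T)
    (h2 : ∀ (v : List (Fin 2)) (j : Fin 2), v.length < m + 1 →
        f v <+: f (v ++ [j]) ∧ f v ≠ f (v ++ [j]))
    (h3 : ∀ v : List (Fin 2), v.length < m + 1 →
        ¬ f (v ++ [0]) <+: f (v ++ [1]) ∧ ¬ f (v ++ [1]) <+: f (v ++ [0]))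
    (b : Fin 2) {c : ℕ}
    (hc : ∀ v : List (Fin 2), v.length ≤ m → ∃ u, f (b :: v) = c :: u) :
    HasFBTMinor (subAt c T) m := by
  refine ⟨fun v => (f (b :: v)).tail, ?_, ?_, ?_⟩
  · intro v hv
    obtain ⟨u, hu⟩ := hc v hv
    have hm : f (b :: v) ∈ T := h1 (b :: v) (by simp only [List.length_cons]; omega)
    rw [hu] at hm
    simp only [hu, List.tail_cons]
    exact mem_subAt.2 hm
  · intro v j hv
    obtain ⟨u, hu⟩ := hc v hv.le
    obtain ⟨u', hu'⟩ := hc (v ++ [j])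
      (by simp only [List.length_append, List.length_singleton]; omega)
    have he : (b :: v) ++ [j] = b :: (v ++ [j]) := rfl
    obtain ⟨ha, hne⟩ := h2 (b :: v) j (by simp only [List.length_cons]; omega)
    rw [he, hu, hu'] at ha hne
    simp only [hu, hu', List.tail_cons]
    exact ⟨(List.cons_prefix_cons.1 ha).2, fun hq => hne (by rw [hq])⟩
  · intro v hv
    obtain ⟨u0, hu0⟩ := hc (v ++ [0])
      (by simp only [List.length_append, List.length_singleton]; omega)
    obtain ⟨u1, hu1⟩ := hc (v ++ [1])
      (by simp only [List.length_append, List.length_singleton]; omega)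
    have he0 : (b :: v) ++ [0] = b :: (v ++ [0]) := rfl
    have he1 : (b :: v) ++ [1] = b :: (v ++ [1]) := rfl
    obtain ⟨ha, hb'⟩ := h3 (b :: v) (by simp only [List.length_cons]; omega)
    rw [he0, he1, hu0, hu1] at ha hb'
    simp only [hu0, hu1, List.tail_cons]
    constructor
    · intro hp; exact ha (List.cons_prefix_cons.2 ⟨rfl, hp⟩)
    · intro hp; exact hb' (List.cons_prefix_cons.2 ⟨rfl, hp⟩)

lemma fbt_decomp {T : Finset (List ℕ)} (hT : IsTreeSet T) {m : ℕ}
    (h : HasFBTMinor T (m + 1)) :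
    (∃ c, HasFBTMinor (subAt c T) (m + 1)) ∨
    (∃ c c', c ≠ c' ∧ HasFBTMinor (subAt c T) m ∧ HasFBTMinor (subAt c' T) m) := by
  obtain ⟨f, h1, h2, h3⟩ := h
  have chain := fbt_chain h2
  by_cases hnil : f [] = []
  · -- root maps to the root
    have h0ne : f [0] ≠ [] := by
      have := (h2 [] 0 (Nat.succ_pos m)).2
      simp only [List.nil_append] at this
      rw [hnil] at this; exact fun hc => this hc.symm
    have h1ne : f [1] ≠ [] := by
      have := (h2 [] 1 (Nat.succ_pos m)).2
      simp only [List.nil_append] at this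
      rw [hnil] at this; exact fun hc => this hc.symm
    obtain ⟨c0, t0, ht0⟩ := List.exists_cons_of_ne_nil h0ne
    obtain ⟨c1, t1, ht1⟩ := List.exists_cons_of_ne_nil h1ne
    have hincomp := h3 [] (Nat.succ_pos m)
    simp only [List.nil_append] at hincomp
    have hkey : ∀ (b : Fin 2) (v : List (Fin 2)), v.length ≤ m →
        f [b] <+: f (b :: v) := by
      intro b v hv
      have := chain v [b] (by simp only [List.length_singleton]; omega)
      simpa using this
    by_cases hc : c0 = c1
    · -- both branches in subtree c0 : that subtree has a minor of depth m+1
      subst hc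
      left
      have hall2 : ∀ (b : Fin 2) (v' : List (Fin 2)), v'.length ≤ m →
          ∃ u, f (b :: v') = c0 :: u := by
        intro b v' hv'
        have hpre := hkey b v' hv'
        rcases fin2_cases b with rfl | rfl
        · rw [ht0] at hpre
          obtain ⟨s, hs⟩ := hpre
          exact ⟨t0 ++ s, by rw [← hs]; simp⟩
        · rw [ht1] at hpre
          obtain ⟨s, hs⟩ := hpre
          exact ⟨t1 ++ s, by rw [← hs]; simp⟩
      have ht0ne : t0 ≠ [] := by
        rintro rfl
        exact hincomp.1 (by rw [ht0, ht1]; exact List.cons_prefix_cons.2 ⟨rfl, List.nil_prefix⟩)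
      have ht1ne : t1 ≠ [] := by
        rintro rfl
        exact hincomp.2 (by rw [ht0, ht1]; exact List.cons_prefix_cons.2 ⟨rfl, List.nil_prefix⟩)
      refine ⟨c0, fun v => match v with
        | [] => []
        | b :: v' => (f (b :: v')).tail, ?_, ?_, ?_⟩
      · rintro (_ | ⟨b, v'⟩) hv
        · show ([] : List ℕ) ∈ subAt c0 T
          rw [mem_subAt]
          have hm : f [0] ∈ T := h1 [0] (by simp only [List.length_singleton]; omega)
          rw [ht0] at hm
          exact tree_prefix_mem hT t0 [c0] hm
        · show (f (b :: v')).tail ∈ subAt c0 T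
          simp only [List.length_cons] at hv
          obtain ⟨u, hu⟩ := hall2 b v' (by omega)
          have hm : f (b :: v') ∈ T := h1 _ (by simp only [List.length_cons]; omega)
          rw [hu] at hm
          simp only [hu, List.tail_cons]
          exact mem_subAt.2 hm
      · rintro (_ | ⟨b, v'⟩) j hv
        · show ([] : List ℕ) <+: (f (j :: ([] : List (Fin 2)))).tail ∧
            ([] : List ℕ) ≠ (f (j :: ([] : List (Fin 2)))).tail
          refine ⟨List.nil_prefix, ?_⟩
          rcases fin2_cases j with rfl | rfl
          · rw [ht0]; simpa using ht0ne.symm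
          · rw [ht1]; simpa using ht1ne.symm
        · show (f (b :: v')).tail <+: (f (b :: (v' ++ [j]))).tail ∧
            (f (b :: v')).tail ≠ (f (b :: (v' ++ [j]))).tail
          simp only [List.length_cons] at hv
          obtain ⟨u, hu⟩ := hall2 b v' (by omega)
          obtain ⟨u', hu'⟩ := hall2 b (v' ++ [j])
            (by simp only [List.length_append, List.length_singleton]; omega)
          have he : (b :: v') ++ [j] = b :: (v' ++ [j]) := rfl
          obtain ⟨ha, hne⟩ := h2 (b :: v') j (by simp only [List.length_cons]; omega)
          rw [he, hu, hu'] at ha hne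
          simp only [hu, hu', List.tail_cons]
          exact ⟨(List.cons_prefix_cons.1 ha).2, fun hq => hne (by rw [hq])⟩
      · rintro (_ | ⟨b, v'⟩) hv
        · show ¬ (f ((0:Fin 2) :: ([] : List (Fin 2)))).tail <+: (f ((1:Fin 2) :: ([] : List (Fin 2)))).tail ∧
            ¬ (f ((1:Fin 2) :: ([] : List (Fin 2)))).tail <+: (f ((0:Fin 2) :: ([] : List (Fin 2)))).tail
          rw [ht0, ht1]
          simp only [List.tail_cons]
          constructor
          · intro hp; exact hincomp.1 (by rw [ht0, ht1]; exact List.cons_prefix_cons.2 ⟨rfl, hp⟩)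
          · intro hp; exact hincomp.2 (by rw [ht0, ht1]; exact List.cons_prefix_cons.2 ⟨rfl, hp⟩)
        · show ¬ (f (b :: (v' ++ [0]))).tail <+: (f (b :: (v' ++ [1]))).tail ∧
            ¬ (f (b :: (v' ++ [1]))).tail <+: (f (b :: (v' ++ [0]))).tail
          simp only [List.length_cons] at hv
          obtain ⟨u0, hu0⟩ := hall2 b (v' ++ [0])
            (by simp only [List.length_append, List.length_singleton]; omega)
          obtain ⟨u1, hu1⟩ := hall2 b (v' ++ [1])
            (by simp only [List.length_append, List.length_singleton]; omega)
          have he0 : (b :: v') ++ [0] = b :: (v' ++ [0]) := rfl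
          have he1 : (b :: v') ++ [1] = b :: (v' ++ [1]) := rfl
          obtain ⟨ha, hb'⟩ := h3 (b :: v') (by simp only [List.length_cons]; omega)
          rw [he0, he1, hu0, hu1] at ha hb'
          simp only [hu0, hu1, List.tail_cons]
          constructor
          · intro hp; exact ha (List.cons_prefix_cons.2 ⟨rfl, hp⟩)
          · intro hp; exact hb' (List.cons_prefix_cons.2 ⟨rfl, hp⟩)
    · -- different heads: two subtrees with depth-m minors
      right
      refine ⟨c0, c1, hc, ?_, ?_⟩
      · refine fbt_branch h1 h2 h3 0 (fun v hv => ?_)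
        have hpre := hkey 0 v hv
        rw [ht0] at hpre
        obtain ⟨s, hs⟩ := hpre
        exact ⟨t0 ++ s, by rw [← hs]; simp⟩
      · refine fbt_branch h1 h2 h3 1 (fun v hv => ?_)
        have hpre := hkey 1 v hv
        rw [ht1] at hpre
        obtain ⟨s, hs⟩ := hpre
        exact ⟨t1 ++ s, by rw [← hs]; simp⟩
  · -- root maps below the root: everything in one subtree
    left
    obtain ⟨c, t, ht⟩ := List.exists_cons_of_ne_nil hnil
    have hall : ∀ v : List (Fin 2), v.length ≤ m + 1 → ∃ u, f v = c :: u := by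
      intro v hv
      have := chain v [] (by simpa using hv)
      simp only [List.nil_append] at this
      rw [ht] at this
      obtain ⟨s, hs⟩ := this
      exact ⟨t ++ s, by rw [← hs]; simp⟩
    refine ⟨c, fun v => (f v).tail, ?_, ?_, ?_⟩
    · intro v hv
      obtain ⟨u, hu⟩ := hall v hv
      have hm : f v ∈ T := h1 v hv
      rw [hu] at hm
      simp only [hu, List.tail_cons]
      exact mem_subAt.2 hm
    · intro v j hv
      obtain ⟨u, hu⟩ := hall v hv.le
      obtain ⟨u', hu'⟩ := hall (v ++ [j])
        (by simp only [List.length_append, List.length_singleton]; omega)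
      obtain ⟨ha, hne⟩ := h2 v j hv
      rw [hu, hu'] at ha hne
      simp only [hu, hu', List.tail_cons]
      exact ⟨(List.cons_prefix_cons.1 ha).2, fun hq => hne (by rw [hq])⟩
    · intro v hv
      obtain ⟨u0, hu0⟩ := hall (v ++ [0])
        (by simp only [List.length_append, List.length_singleton]; omega)
      obtain ⟨u1, hu1⟩ := hall (v ++ [1])
        (by simp only [List.length_append, List.length_singleton]; omega)
      obtain ⟨ha, hb'⟩ := h3 v hv
      rw [hu0, hu1] at ha hb'
      simp only [hu0, hu1, List.tail_cons]
      constructor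
      · intro hp; exact ha (List.cons_prefix_cons.2 ⟨rfl, hp⟩)
      · intro hp; exact hb' (List.cons_prefix_cons.2 ⟨rfl, hp⟩)

end Decomp
section Count

lemma isTreeSet_subAt {T : Finset (List ℕ)} {i : ℕ} (hT : IsTreeSet T) (hi : [i] ∈ T) :
    IsTreeSet (subAt i T) := by
  refine ⟨mem_subAt.2 (by simpa using hi), fun v j hv => ?_⟩
  rw [mem_subAt] at hv ⊢
  have : (i :: v) ++ [j] ∈ T := by simpa using hv
  exact hT.2 (i :: v) j this

lemma degLE_subAt {T : Finset (List ℕ)} {i d : ℕ} (h : DegLE T d) :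
    DegLE (subAt i T) d := by
  intro v hv
  have hm : i :: v ∈ T := mem_subAt.1 hv
  have := h (i :: v) hm
  have hs : { j : ℕ | (i :: v) ++ [j] ∈ T } = { j : ℕ | v ++ [j] ∈ subAt i T } := by
    ext j; simp [mem_subAt]
  rwa [hs] at this

lemma depthLE_subAt {T : Finset (List ℕ)} {i n : ℕ} (h : DepthLE T (n + 1)) :
    DepthLE (subAt i T) n := by
  intro v hv
  have := h (i :: v) (mem_subAt.1 hv)
  simp only [List.length_cons] at this
  omega

lemma kids_card_le {T : Finset (List ℕ)} {d : ℕ} (hroot : [] ∈ T) (h : DegLE T d) :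
    (kids T).card ≤ d := by
  have hh := h [] hroot
  have hs : { i : ℕ | [] ++ [i] ∈ T } = ↑(kids T) := by
    ext i; simp [mem_kids]
  rwa [hs, Set.ncard_coe_finset] at hh

lemma eq_root_of_kids_empty {T : Finset (List ℕ)} (hT : IsTreeSet T) (hk : kids T = ∅) :
    T = {[]} := by
  ext v
  simp only [Finset.mem_singleton]
  constructor
  · intro hv
    by_contra hne
    obtain ⟨a, t, rfl⟩ := List.exists_cons_of_ne_nil hne
    have h1 : [a] ∈ T := tree_prefix_mem hT t [a] (by simpa using hv)
    have : a ∈ kids T := mem_kids.2 h1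
    simp [hk] at this
  · rintro rfl; exact hT.1

lemma leafF_singleton : leafF ({[]} : Finset (List ℕ)) = {[]} := by
  ext v
  simp only [mem_leafF, IsLeaf, Finset.mem_singleton]
  constructor
  · rintro ⟨h, -⟩; simpa using h
  · rintro rfl
    exact ⟨by simp, fun i => by simp⟩

lemma leafF_eq_biUnion {T : Finset (List ℕ)} (hT : IsTreeSet T) (hk : kids T ≠ ∅) :
    leafF T = (kids T).biUnion (fun i => (leafF (subAt i T)).image (i :: ·)) := by
  ext v
  simp only [Finset.mem_biUnion, Finset.mem_image, mem_leafF, IsLeaf, mem_kids, mem_subAt]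
  constructor
  · rintro ⟨hv, hleaf⟩
    have hne : v ≠ [] := by
      rintro rfl
      obtain ⟨a, ha⟩ := Finset.nonempty_iff_ne_empty.2 hk
      exact hleaf a (by simpa using mem_kids.1 ha)
    obtain ⟨a, t, rfl⟩ := List.exists_cons_of_ne_nil hne
    refine ⟨a, tree_prefix_mem hT t [a] (by simpa using hv), t, ⟨by simpa using hv, ?_⟩, rfl⟩
    intro j hj
    exact hleaf j (by simpa using hj)
  · rintro ⟨a, ha, t, ⟨ht, hleaf⟩, rfl⟩
    refine ⟨by simpa using ht, fun j hj => ?_⟩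
    exact hleaf j (by simpa using hj)

lemma leafF_card_eq_sum {T : Finset (List ℕ)} (hT : IsTreeSet T) (hk : kids T ≠ ∅) :
    (leafF T).card = ∑ i ∈ kids T, (leafF (subAt i T)).card := by
  rw [leafF_eq_biUnion hT hk, Finset.card_biUnion]
  · refine Finset.sum_congr rfl (fun i _ => ?_)
    exact Finset.card_image_of_injective _ (fun a b h => by simpa using h)
  · intro x _ y _ hxy
    simp only [Finset.disjoint_left, Finset.mem_image]
    rintro v ⟨a, -, rfl⟩ ⟨b, -, hb⟩
    apply hxy
    have := hb
    simp only [List.cons.injEq] at this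
    exact this.1.symm

end Count
section Arith

lemma Frec (a k n : ℕ) :
    ∑ i ∈ Finset.range (k + 1 + 1), a ^ i * (n + 1).choose i
      = ∑ i ∈ Finset.range (k + 1 + 1), a ^ i * n.choose i
        + a * ∑ i ∈ Finset.range (k + 1), a ^ i * n.choose i := by
  rw [Finset.sum_range_succ' (fun i => a ^ i * (n + 1).choose i) (k + 1),
      Finset.sum_range_succ' (fun i => a ^ i * n.choose i) (k + 1)]
  simp only [Nat.choose_succ_succ, Nat.succ_eq_add_one, mul_add, Finset.sum_add_distrib,
    pow_zero, Nat.choose_zero_right, mul_one, one_mul]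
  rw [Finset.mul_sum]
  have he : ∀ i ∈ Finset.range (k + 1), a ^ (i + 1) * n.choose i = a * (a ^ i * n.choose i) :=
    fun i _ => by ring
  rw [Finset.sum_congr rfl he]
  omega

lemma F_mono (a k n : ℕ) :
    ∑ i ∈ Finset.range (k + 1), a ^ i * n.choose i
      ≤ ∑ i ∈ Finset.range (k + 1 + 1), a ^ i * n.choose i := by
  apply Finset.sum_le_sum_of_subset
  exact Finset.range_subset_range.2 (by omega)

lemma F_pos (a k n : ℕ) : 1 ≤ ∑ i ∈ Finset.range (k + 1), a ^ i * n.choose i := by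
  calc 1 = a ^ 0 * n.choose 0 := by simp
    _ ≤ _ := Finset.single_le_sum (f := fun i => a ^ i * n.choose i)
        (fun i _ => Nat.zero_le _) (Finset.mem_range.2 (by omega))

lemma F_zero_n (a k : ℕ) : ∑ i ∈ Finset.range (k + 1), a ^ i * Nat.choose 0 i = 1 := by
  induction k with
  | zero => simp
  | succ k ih => rw [Finset.sum_range_succ, ih]; simp

end Arith

section Upper

lemma upper_bound (d : ℕ) : ∀ n k (T : Finset (List ℕ)), IsTreeSet T → DegLE T d →
    DepthLE T n → ¬ HasFBTMinor T (k + 1) →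
    (leafF T).card ≤ ∑ i ∈ Finset.range (k + 1), (d - 1) ^ i * n.choose i := by
  intro n
  induction n with
  | zero =>
    intro k T hT hdeg hdep hmin
    have hTeq : T = {[]} := by
      ext v
      simp only [Finset.mem_singleton]
      constructor
      · intro hv
        have := hdep v hv
        simpa [List.length_eq_zero_iff] using this
      · rintro rfl; exact hT.1
    rw [hTeq, leafF_singleton]
    simpa using F_pos (d - 1) k 0
  | succ n ih =>
    intro k T hT hdeg hdep hmin
    by_cases hk : kids T = ∅
    · rw [eq_root_of_kids_empty hT hk, leafF_singleton]
      simpa using F_pos (d - 1) k (n + 1)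
    · rw [leafF_card_eq_sum hT hk]
      -- facts about subtrees
      have hsub : ∀ i ∈ kids T, IsTreeSet (subAt i T) ∧ DegLE (subAt i T) d ∧
          DepthLE (subAt i T) n ∧ ¬ HasFBTMinor (subAt i T) (k + 1) := by
        intro i hi
        exact ⟨isTreeSet_subAt hT (mem_kids.1 hi), degLE_subAt hdeg, depthLE_subAt hdep,
          fun hc => hmin (fbt_lift hc)⟩
      have hd1 : 1 ≤ d := by
        have h1 : 1 ≤ (kids T).card := Finset.card_pos.2 (Finset.nonempty_iff_ne_empty.2 hk)
        have h2 := kids_card_le hT.1 hdeg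
        omega
      cases k with
      | zero =>
        -- all subtrees have an FBT minor of depth 0, so at most one kid
        have hall : ∀ i ∈ kids T, HasFBTMinor (subAt i T) 0 := by
          intro i hi
          refine ⟨fun _ => [], fun v hv => ?_, fun v j hv => by omega, fun v hv => by omega⟩
          exact mem_subAt.2 (by simpa using mem_kids.1 hi)
        have hcard : (kids T).card ≤ 1 := by
          by_contra hcon
          have hgt : 1 < (kids T).card := by omega
          obtain ⟨a, ha, b, hb, hab⟩ := Finset.one_lt_card.1 hgt
          exact hmin (fbt_combine hab hT.1 (hall a ha) (hall b hb))
        obtain ⟨i, hi⟩ := Finset.card_eq_one.1 (le_antisymm hcard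
          (Finset.card_pos.2 (Finset.nonempty_iff_ne_empty.2 hk)))
        rw [hi, Finset.sum_singleton]
        have hii : i ∈ kids T := by rw [hi]; exact Finset.mem_singleton_self i
        obtain ⟨h1, h2, h3, h4⟩ := hsub i hii
        calc (leafF (subAt i T)).card ≤ ∑ j ∈ Finset.range 1, (d - 1) ^ j * n.choose j :=
              ih 0 _ h1 h2 h3 h4
          _ = 1 := by simp
          _ = ∑ j ∈ Finset.range 1, (d - 1) ^ j * (n + 1).choose j := by simp
      | succ k' =>
        classical
        set S := (kids T).filter (fun i => HasFBTMinor (subAt i T) (k' + 1)) with hS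
        have hScard : S.card ≤ 1 := by
          by_contra hcon
          have hgt : 1 < S.card := by omega
          obtain ⟨a, ha, b, hb, hab⟩ := Finset.one_lt_card.1 hgt
          rw [hS, Finset.mem_filter] at ha hb
          exact hmin (fbt_combine hab hT.1 ha.2 hb.2)
        have hbig : ∀ i ∈ kids T, (leafF (subAt i T)).card ≤
            ∑ j ∈ Finset.range (k' + 1 + 1), (d - 1) ^ j * n.choose j := by
          intro i hi
          obtain ⟨h1, h2, h3, h4⟩ := hsub i hi
          exact ih (k' + 1) _ h1 h2 h3 h4
        have hsmall : ∀ i ∈ kids T, i ∉ S → (leafF (subAt i T)).card ≤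
            ∑ j ∈ Finset.range (k' + 1), (d - 1) ^ j * n.choose j := by
          intro i hi hiS
          obtain ⟨h1, h2, h3, -⟩ := hsub i hi
          have h4 : ¬ HasFBTMinor (subAt i T) (k' + 1) := by
            intro hc
            exact hiS (Finset.mem_filter.2 ⟨hi, hc⟩)
          exact ih k' _ h1 h2 h3 h4
        set A := ∑ j ∈ Finset.range (k' + 1 + 1), (d - 1) ^ j * n.choose j with hA
        set B := ∑ j ∈ Finset.range (k' + 1), (d - 1) ^ j * n.choose j with hB
        have hBA : B ≤ A := F_mono (d - 1) k' n
        have hkd : (kids T).card ≤ d := kids_card_le hT.1 hdeg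
        have hsplit : ∑ i ∈ kids T, (leafF (subAt i T)).card ≤ A + (d - 1) * B := by
          have hSsub : S ⊆ kids T := Finset.filter_subset _ _
          rw [← Finset.sum_filter_add_sum_filter_not (kids T)
            (fun i => HasFBTMinor (subAt i T) (k' + 1))]
          have hb1 : ∑ i ∈ S, (leafF (subAt i T)).card ≤ S.card * A := by
            calc ∑ i ∈ S, (leafF (subAt i T)).card ≤ ∑ _i ∈ S, A :=
                  Finset.sum_le_sum (fun i hi => hbig i (hSsub hi))
              _ = S.card * A := by rw [Finset.sum_const, smul_eq_mul]
          have hb2 : ∑ i ∈ (kids T).filter (fun i => ¬ HasFBTMinor (subAt i T) (k' + 1)),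
              (leafF (subAt i T)).card ≤
              ((kids T).filter (fun i => ¬ HasFBTMinor (subAt i T) (k' + 1))).card * B := by
            calc _ ≤ ∑ _i ∈ (kids T).filter (fun i => ¬ HasFBTMinor (subAt i T) (k' + 1)), B :=
                  Finset.sum_le_sum (fun i hi => by
                    rw [Finset.mem_filter] at hi
                    exact hsmall i hi.1 (fun hc => hi.2 (Finset.mem_filter.1 hc).2))
              _ = _ := by rw [Finset.sum_const, smul_eq_mul]
          have hcards : S.card +
              ((kids T).filter (fun i => ¬ HasFBTMinor (subAt i T) (k' + 1))).card
              = (kids T).card := by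
            rw [hS]
            exact Finset.card_filter_add_card_filter_not _
          -- combine
          have := Nat.add_le_add hb1 hb2
          refine this.trans ?_
          rcases Nat.eq_zero_or_pos S.card with h0 | h1
          · rw [h0]
            simp only [Nat.zero_mul, Nat.zero_add]
            have hc2 : ((kids T).filter (fun i => ¬ HasFBTMinor (subAt i T) (k' + 1))).card ≤ d := by
              omega
            have hd' : d - 1 + 1 = d := by omega
            calc _ ≤ d * B := Nat.mul_le_mul_right B hc2
              _ = (d - 1) * B + B := by
                  obtain ⟨d', rfl⟩ : ∃ d', d = d' + 1 := ⟨d - 1, by omega⟩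
                  rw [Nat.add_sub_cancel]; ring
              _ ≤ (d - 1) * B + A := Nat.add_le_add_left hBA _
              _ = A + (d - 1) * B := by ring
          · have hs1 : S.card = 1 := by omega
            rw [hs1]
            have hc2 : ((kids T).filter (fun i => ¬ HasFBTMinor (subAt i T) (k' + 1))).card ≤ d - 1 := by
              omega
            have h5 := Nat.mul_le_mul_right B hc2
            calc 1 * A + ((kids T).filter (fun i => ¬ HasFBTMinor (subAt i T) (k' + 1))).card * B
                = A + ((kids T).filter (fun i => ¬ HasFBTMinor (subAt i T) (k' + 1))).card * B := by ring
              _ ≤ A + (d - 1) * B := Nat.add_le_add_left h5 A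
        refine hsplit.trans ?_
        rw [Frec (d - 1) k' n, ← hA, ← hB]

end Upper
section Constr

/-- The extremal tree: `Tr d k n`. -/
def Tr (d : ℕ) : ℕ → ℕ → Finset (List ℕ)
  | _, 0 => {[]}
  | 0, _ + 1 => {[]}
  | k + 1, n + 1 =>
      {[]} ∪ (Finset.range d).biUnion
        (fun j => (if j = 0 then Tr d (k + 1) n else Tr d k n).image (j :: ·))
  termination_by k n => (n, k)

lemma Tr_zero (d k : ℕ) : Tr d k 0 = {[]} := by
  match k with
  | 0 => rw [Tr]
  | k + 1 => rw [Tr]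

lemma Tr_zero' (d n : ℕ) : Tr d 0 (n + 1) = {[]} := by rw [Tr]

lemma root_mem_Tr (d k n : ℕ) : [] ∈ Tr d k n := by
  match k, n with
  | _, 0 => simp [Tr]
  | 0, _ + 1 => simp [Tr]
  | k + 1, n + 1 => rw [Tr]; simp

lemma mem_Tr_succ {d k n : ℕ} {v : List ℕ} :
    v ∈ Tr d (k + 1) (n + 1) ↔
      v = [] ∨ ∃ j w, j < d ∧ v = j :: w ∧
        w ∈ (if j = 0 then Tr d (k + 1) n else Tr d k n) := by
  rw [Tr]
  simp only [Finset.mem_union, Finset.mem_singleton, Finset.mem_biUnion, Finset.mem_range,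
    Finset.mem_image]
  constructor
  · rintro (rfl | ⟨j, hj, w, hw, rfl⟩)
    · exact Or.inl rfl
    · exact Or.inr ⟨j, w, hj, rfl, hw⟩
  · rintro (rfl | ⟨j, w, hj, rfl, hw⟩)
    · exact Or.inl rfl
    · exact Or.inr ⟨j, hj, w, hw, rfl⟩

lemma subAt_Tr (d k n j : ℕ) :
    subAt j (Tr d (k + 1) (n + 1)) =
      if j < d then (if j = 0 then Tr d (k + 1) n else Tr d k n) else ∅ := by
  ext w
  rw [mem_subAt, mem_Tr_succ]
  constructor
  · rintro (h | ⟨j', w', hj', hw', hmem⟩)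
    · exact absurd h (by simp)
    · obtain ⟨rfl, rfl⟩ : j' = j ∧ w' = w := by
        constructor <;> [skip; skip] <;> simp_all [List.cons.injEq]
      rw [if_pos hj']
      exact hmem
  · intro h
    by_cases hj : j < d
    · rw [if_pos hj] at h
      exact Or.inr ⟨j, w, hj, rfl, h⟩
    · rw [if_neg hj] at h
      exact absurd h (by simp)

lemma kids_Tr (d k n : ℕ) : kids (Tr d (k + 1) (n + 1)) = Finset.range d := by
  ext i
  rw [mem_kids, Finset.mem_range]
  have h := subAt_Tr d k n i
  have h2 : ([i] : List ℕ) ∈ Tr d (k + 1) (n + 1) ↔ ([] : List ℕ) ∈ subAt i (Tr d (k + 1) (n + 1)) := by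
    rw [mem_subAt]
  rw [h2, h]
  by_cases hi : i < d
  · simp only [if_pos hi]
    by_cases h0 : i = 0 <;> simp [h0, root_mem_Tr, hi] <;> omega
  · simp [if_neg hi, hi]

lemma Tr_isTreeSet (d : ℕ) : ∀ n k, IsTreeSet (Tr d k n) := by
  intro n
  induction n with
  | zero =>
    intro k
    constructor
    · exact root_mem_Tr d k 0
    · intro v i hv
      simp [Tr] at hv
  | succ n ih =>
    intro k
    cases k with
    | zero =>
      constructor
      · exact root_mem_Tr d 0 (n + 1)
      · intro v i hv; simp [Tr] at hv
    | succ k =>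
      constructor
      · exact root_mem_Tr d (k + 1) (n + 1)
      · intro v i hv
        rw [mem_Tr_succ] at hv ⊢
        rcases hv with h | ⟨j, w, hj, hw, hmem⟩
        · exact absurd h (by simp)
        · rcases v with _ | ⟨a, v'⟩
          · exact Or.inl rfl
          · right
            simp only [List.cons_append, List.cons.injEq] at hw
            obtain ⟨rfl, hw2⟩ := hw
            refine ⟨a, v', hj, rfl, ?_⟩
            rw [← hw2] at hmem
            by_cases h0 : a = 0
            · simp only [h0, reduceIte] at hmem ⊢
              exact (ih (k + 1)).2 v' i hmem
            · simp only [h0, reduceIte] at hmem ⊢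
              exact (ih k).2 v' i hmem

lemma Tr_depthLE (d : ℕ) : ∀ n k, DepthLE (Tr d k n) n := by
  intro n
  induction n with
  | zero =>
    intro k v hv
    simp [Tr] at hv
    simp [hv]
  | succ n ih =>
    intro k v hv
    cases k with
    | zero =>
      simp [Tr] at hv
      simp [hv]
    | succ k =>
      rw [mem_Tr_succ] at hv
      rcases hv with rfl | ⟨j, w, hj, rfl, hmem⟩
      · simp
      · simp only [List.length_cons]
        by_cases h0 : j = 0
        · simp only [h0, reduceIte] at hmem
          have := ih (k + 1) w (by simpa using hmem)
          omega
        · simp only [h0, reduceIte] at hmem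
          have := ih k w (by simpa using hmem)
          omega

lemma Tr_degLE (d : ℕ) : ∀ n k, DegLE (Tr d k n) d := by
  intro n
  induction n with
  | zero =>
    intro k v hv
    simp [Tr] at hv
    subst hv
    have : { i : ℕ | [] ++ [i] ∈ Tr d k 0 } = ∅ := by
      ext i; simp [Tr]
    rw [this]
    simp
  | succ n ih =>
    intro k v hv
    cases k with
    | zero =>
      simp [Tr] at hv
      subst hv
      have : { i : ℕ | [] ++ [i] ∈ Tr d 0 (n + 1) } = ∅ := by
        ext i; simp [Tr]
      rw [this]
      simp
    | succ k =>
      rcases v with _ | ⟨a, v'⟩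
      · have hroot : { i : ℕ | [] ++ [i] ∈ Tr d (k + 1) (n + 1) } = ↑(Finset.range d) := by
          ext i
          simp only [List.nil_append, Finset.coe_range, Set.mem_setOf_eq, Set.mem_Iio]
          rw [← mem_kids, kids_Tr, Finset.mem_range]
        rw [hroot, Set.ncard_coe_finset, Finset.card_range]
      · rw [mem_Tr_succ] at hv
        rcases hv with h | ⟨j, w, hj, hw, hmem⟩
        · exact absurd h (by simp)
        · simp only [List.cons.injEq] at hw
          obtain ⟨rfl, rfl⟩ := hw
          have hset : { i : ℕ | (a :: v') ++ [i] ∈ Tr d (k + 1) (n + 1) }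
              = { i : ℕ | v' ++ [i] ∈ (if a = 0 then Tr d (k + 1) n else Tr d k n) } := by
            ext i
            simp only [Set.mem_setOf_eq, List.cons_append]
            rw [show (a :: (v' ++ [i]) ∈ Tr d (k + 1) (n + 1)) ↔
                (v' ++ [i] ∈ subAt a (Tr d (k + 1) (n + 1))) from (mem_subAt).symm,
              subAt_Tr, if_pos hj]
          rw [hset]
          by_cases h0 : a = 0
          · simp only [h0, reduceIte] at hmem ⊢
            exact ih (k + 1) v' hmem
          · simp only [h0, reduceIte] at hmem ⊢
            exact ih k v' hmem

lemma not_fbt_singleton (m : ℕ) : ¬ HasFBTMinor ({[]} : Finset (List ℕ)) (m + 1) := by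
  rintro ⟨f, h1, h2, -⟩
  have ha : f [] = [] := by simpa using h1 [] (by simp)
  have hb : f [0] = [] := by simpa using h1 [0] (by simp)
  have := (h2 [] 0 (by simp)).2
  simp only [List.nil_append] at this
  exact this (ha.trans hb.symm)

lemma Tr_no_minor (d : ℕ) : ∀ n k, ¬ HasFBTMinor (Tr d k n) (k + 1) := by
  intro n
  induction n with
  | zero =>
    intro k
    rw [Tr_zero]
    exact not_fbt_singleton k
  | succ n ih =>
    intro k
    cases k with
    | zero =>
      rw [Tr_zero']
      exact not_fbt_singleton 0
    | succ k =>
      intro hmin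
      rcases fbt_decomp (Tr_isTreeSet d (n + 1) (k + 1)) hmin with
        ⟨c, hc⟩ | ⟨c, c', hne, hc, hc'⟩
      · rw [subAt_Tr] at hc
        by_cases hcd : c < d
        · rw [if_pos hcd] at hc
          by_cases h0 : c = 0
          · rw [if_pos h0] at hc
            exact ih (k + 1) hc
          · rw [if_neg h0] at hc
            exact ih k (fbt_mono hc)
        · rw [if_neg hcd] at hc
          exact fbt_not_empty hc
      · rw [subAt_Tr] at hc hc'
        by_cases hcd : c < d
        case neg => rw [if_neg hcd] at hc; exact fbt_not_empty hc
        by_cases hcd' : c' < d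
        case neg => rw [if_neg hcd'] at hc'; exact fbt_not_empty hc'
        rw [if_pos hcd] at hc
        rw [if_pos hcd'] at hc'
        by_cases h0 : c = 0
        · have h0' : ¬ c' = 0 := fun hh => hne (by rw [h0, hh])
          rw [if_neg h0'] at hc'
          exact ih k hc'
        · rw [if_neg h0] at hc
          exact ih k hc

lemma Tr_leafcard (d : ℕ) : ∀ n k,
    (leafF (Tr d k n)).card = ∑ i ∈ Finset.range (k + 1), (d - 1) ^ i * n.choose i := by
  intro n
  induction n with
  | zero =>
    intro k
    rw [Tr_zero, leafF_singleton, F_zero_n]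
    simp
  | succ n ih =>
    intro k
    cases k with
    | zero =>
      rw [Tr_zero', leafF_singleton]
      simp
    | succ k =>
      rcases Nat.eq_zero_or_pos d with rfl | hd
      · -- d = 0 : tree is {[]}
        have hTr : Tr 0 (k + 1) (n + 1) = {[]} := by
          rw [Tr]
          simp
        rw [hTr, leafF_singleton]
        have : ∀ i ∈ Finset.range (k + 1 + 1), (0 - 1) ^ i * (n + 1).choose i
            = if i = 0 then 1 else 0 := by
          intro i hi
          match i with
          | 0 => simp
          | i + 1 => simp [Nat.zero_sub]
        rw [Finset.sum_congr rfl this, Finset.sum_ite_eq' (Finset.range (k + 1 + 1)) 0 (fun _ => 1)]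
        simp
      · -- d ≥ 1
        have hkids : kids (Tr d (k + 1) (n + 1)) = Finset.range d := kids_Tr d k n
        have hne : kids (Tr d (k + 1) (n + 1)) ≠ ∅ := by
          rw [hkids]
          simp only [ne_eq, Finset.range_eq_empty_iff]
          omega
        rw [leafF_card_eq_sum (Tr_isTreeSet d (n + 1) (k + 1)) hne, hkids]
        have hsum : ∀ j ∈ Finset.range d, (leafF (subAt j (Tr d (k + 1) (n + 1)))).card
            = if j = 0 then ∑ i ∈ Finset.range (k + 1 + 1), (d - 1) ^ i * n.choose i
              else ∑ i ∈ Finset.range (k + 1), (d - 1) ^ i * n.choose i := by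
          intro j hj
          rw [subAt_Tr, if_pos (Finset.mem_range.1 hj)]
          by_cases h0 : j = 0
          · rw [if_pos h0, if_pos h0]
            exact ih (k + 1)
          · rw [if_neg h0, if_neg h0]
            exact ih k
        rw [Finset.sum_congr rfl hsum]
        obtain ⟨d', rfl⟩ : ∃ d', d = d' + 1 := ⟨d - 1, by omega⟩
        rw [Finset.sum_range_succ']
        have hstep : ∀ i ∈ Finset.range d', (if i + 1 = 0 then
              ∑ i ∈ Finset.range (k + 1 + 1), (d' + 1 - 1) ^ i * n.choose i
            else ∑ i ∈ Finset.range (k + 1), (d' + 1 - 1) ^ i * n.choose i)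
            = ∑ i ∈ Finset.range (k + 1), (d' + 1 - 1) ^ i * n.choose i := by
          intro i hi
          rw [if_neg (by omega)]
        rw [Finset.sum_congr rfl hstep, Finset.sum_const, smul_eq_mul, if_pos rfl,
          Frec (d' + 1 - 1) k n]
        have hdd : d' + 1 - 1 = d' := by omega
        rw [hdd, Finset.card_range]
        ring
end Constr

/-- `ℓ_d^k(n) = Σ_{i=0}^{k} (d−1)^i · C(n,i)` for all `d, k, n`. -/
theorem ell_closed_form (d k n : ℕ) :
    ell d k n = ∑ i ∈ Finset.range (k + 1), (d - 1) ^ i * n.choose i := by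
  have hmem : (∑ i ∈ Finset.range (k + 1), (d - 1) ^ i * n.choose i) ∈
      { L : ℕ | ∃ T : Finset (List ℕ),
        IsTreeSet T ∧ DegLE T d ∧ DepthLE T n ∧ ¬ HasFBTMinor T (k + 1) ∧
        leafCount T = L } :=
    ⟨Tr d k n, Tr_isTreeSet d n k, Tr_degLE d n k, Tr_depthLE d n k, Tr_no_minor d n k,
      by rw [leafCount_eq, Tr_leafcard]⟩
  have hub : ∀ L ∈ { L : ℕ | ∃ T : Finset (List ℕ),
      IsTreeSet T ∧ DegLE T d ∧ DepthLE T n ∧ ¬ HasFBTMinor T (k + 1) ∧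
      leafCount T = L }, L ≤ ∑ i ∈ Finset.range (k + 1), (d - 1) ^ i * n.choose i := by
    rintro L ⟨T, h1, h2, h3, h4, rfl⟩
    rw [leafCount_eq]
    exact upper_bound d n k T h1 h2 h3 h4
  rw [ell]
  exact le_antisymm (csSup_le ⟨_, hmem⟩ hub) (le_csSup ⟨_, hub⟩ hmem)
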